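/- Let α > 0, 0 < β < 1, ρ > 0 and let B(z) = ∏_{n=0}^∞ B_{α,β^nρ}(z). Then for every x ∈ ℝ and every y with y > α/ρ, one has the upper estimate |B(x+iy)| ≤ exp( − log(cosh(πα)) · log(ρy/α) / log(1/β) ). -/

import Mathlib

open Complex

/-- The function `B_{α,γ}(z) = (e^{iπγz} + e^{−πα})/(1 + e^{iπγz−πα})`. -/
noncomputable def Bag (α γ : ℝ) (z : ℂ) : ℂ :=
  (Complex.exp (Complex.I * Real.pi * γ * z) + Complex.exp (-(Real.pi * α : ℝ))) /
    (1 + Complex.exp (Complex.I * Real.pi * γ * z - (Real.pi * α : ℝ)))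

/-- The Blaschke product `B(z) = ∏_{n=0}^∞ B_{α,β^nρ}(z)`. -/
noncomputable def Bprod (α β ρ : ℝ) (z : ℂ) : ℂ :=
  ∏' n : ℕ, Bag α (β ^ n * ρ) z

/-!
Each factor is the image of `w = e^{iπγz}` under the Möbius map `w ↦ (w + a)/(1 + a w)` with
`a = e^{−πα} ∈ (0, 1)`. From `|1 + a w|² − |w + a|² = (1 − a²)(1 − |w|²)` one gets
`|(w + a)/(1 + a w)| ≤ (t + a)/(1 + a t)` for `|w| = t ≤ 1`, and the right side increases with `t`.
As `|w| = e^{−πγ y}`, every factor has modulus at most `1`, and those with `γ y ≥ α` have modulus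
at most `2a/(1 + a²) = 1/cosh(πα)`. For `γ = βⁿρ` this happens for all
`n < log(ρy/α)/log(1/β)`, and the product converges because `|B_{α,γ}(z) − 1| ≤ |e^{iπγz} − 1|`
decays geometrically in `n`.
-/

open scoped Real

section Mobius

variable {a : ℝ} {w : ℂ}

theorem norm_one_add_mul_sq_sub_norm_add_sq (a : ℝ) (w : ℂ) :
    ‖1 + a * w‖ ^ 2 - ‖w + a‖ ^ 2 = (1 - a ^ 2) * (1 - ‖w‖ ^ 2) := by
  simp only [Complex.sq_norm, Complex.normSq_apply, add_re, add_im, mul_re, mul_im, ofReal_re,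
    ofReal_im, one_re, one_im]
  ring

theorem one_sub_mul_norm_le_norm_one_add_mul (ha : 0 ≤ a) (w : ℂ) :
    1 - a * ‖w‖ ≤ ‖1 + a * w‖ := by
  have h := norm_sub_norm_le (1 : ℂ) (-(a * w))
  rwa [norm_one, norm_neg, norm_mul, norm_real, Real.norm_of_nonneg ha, sub_neg_eq_add] at h

theorem norm_add_div_one_add_mul_le (ha0 : 0 ≤ a) (ha1 : a < 1) (hw : ‖w‖ ≤ 1) :
    ‖(w + a) / (1 + a * w)‖ ≤ (‖w‖ + a) / (1 + a * ‖w‖) := by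
  set t := ‖w‖
  set D := ‖1 + a * w‖
  have ht0 : 0 ≤ t := norm_nonneg w
  have hD_pos : 0 < D :=
    (by nlinarith : 0 < 1 - a * t).trans_le (one_sub_mul_norm_le_norm_one_add_mul ha0 w)
  have hD_le : D ≤ 1 + a * t := by
    refine (norm_add_le _ _).trans ?_
    rw [norm_one, norm_mul, norm_real, Real.norm_of_nonneg ha0]
  have hK : 0 ≤ (1 - a ^ 2) * (1 - t ^ 2) := mul_nonneg (by nlinarith) (by nlinarith)
  have hid := norm_one_add_mul_sq_sub_norm_add_sq a w
  rw [norm_div, div_le_div_iff₀ hD_pos (by positivity)]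
  -- `‖w + a‖² = D² - K` and `(t + a)² = (1 + a t)² - K`, so the claim reduces to `D ≤ 1 + a t`.
  refine le_of_pow_le_pow_left₀ two_ne_zero (by positivity) ?_
  nlinarith [mul_le_mul_of_nonneg_left (pow_le_pow_left₀ hD_pos.le hD_le 2) hK]

theorem norm_add_div_one_add_mul_sub_one_le (ha0 : 0 ≤ a) (ha1 : a < 1) (hw : ‖w‖ ≤ 1) :
    ‖(w + a) / (1 + a * w) - 1‖ ≤ ‖w - 1‖ := by
  have hD : 1 - a ≤ ‖1 + a * w‖ :=
    (by nlinarith : 1 - a ≤ 1 - a * ‖w‖).trans (one_sub_mul_norm_le_norm_one_add_mul ha0 w)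
  have hD_pos : 0 < ‖1 + a * w‖ := (sub_pos.mpr ha1).trans_le hD
  have hsplit : (w + a) / (1 + a * w) - 1 = (w - 1) * ((1 - a : ℝ) : ℂ) / (1 + a * w) := by
    rw [div_sub_one (norm_pos_iff.mp hD_pos)]
    push_cast
    ring
  rw [hsplit, norm_div, norm_mul, norm_real, Real.norm_of_nonneg (sub_pos.mpr ha1).le,
    div_le_iff₀ hD_pos]
  exact mul_le_mul_of_nonneg_left hD (norm_nonneg _)

end Mobius

theorem add_div_one_add_mul_le_of_le {a s t : ℝ} (ha0 : 0 ≤ a) (ha1 : a ≤ 1) (hs : 0 ≤ s)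
    (hst : s ≤ t) : (s + a) / (1 + a * s) ≤ (t + a) / (1 + a * t) := by
  rw [div_le_div_iff₀ (by positivity) (by nlinarith)]
  nlinarith [mul_nonneg (sub_nonneg.mpr hst) (by nlinarith : 0 ≤ 1 - a ^ 2)]

theorem inv_cosh_eq (x : ℝ) :
    (Real.cosh x)⁻¹ = (Real.exp (-x) + Real.exp (-x)) / (1 + Real.exp (-x) * Real.exp (-x)) := by
  rw [Real.cosh_eq, Real.exp_neg]
  field_simp
  ring

theorem summable_norm_exp_sub_one {ι : Type*} {ζ : ι → ℂ} (h : Summable fun i ↦ ‖ζ i‖) :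
    Summable fun i ↦ ‖exp (ζ i) - 1‖ :=
  (h.mul_left 2).of_norm_bounded_eventually <| by
    filter_upwards [h.tendsto_cofinite_zero.eventually_le_const one_pos] with i hi
    simpa using norm_exp_sub_one_le hi

theorem tprod_le_pow_of_le {f : ℕ → ℝ} (hf : Multipliable f) (h0 : ∀ i, 0 ≤ f i)
    (h1 : ∀ i, f i ≤ 1) {c : ℝ} {m : ℕ} (hc : ∀ i < m, f i ≤ c) : ∏' i, f i ≤ c ^ m :=
  calc ∏' i, f i ≤ ∏ i ∈ Finset.range m, f i :=
        le_of_tendsto hf.hasProd <| (Filter.eventually_ge_atTop (Finset.range m)).mono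
          fun _ hs ↦ Finset.prod_le_prod_of_subset_of_le_one hs (fun i _ ↦ h0 i) fun i _ _ ↦ h1 i
    _ ≤ ∏ _i ∈ Finset.range m, c :=
        Finset.prod_le_prod (fun i _ ↦ h0 i) fun i hi ↦ hc i (Finset.mem_range.mp hi)
    _ = c ^ m := by rw [Finset.prod_const, Finset.card_range]

theorem one_le_pow_mul_of_le_log_div {β u : ℝ} (hβ0 : 0 < β) (hβ1 : β < 1) (hu : 0 < u) {n : ℕ}
    (hn : (n : ℝ) ≤ Real.log u / Real.log (1 / β)) : 1 ≤ β ^ n * u := by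
  have hlog : 0 < Real.log (1 / β) := Real.log_pos (one_lt_one_div hβ0 hβ1)
  have hn' := (le_div_iff₀ hlog).mp hn
  rw [one_div, Real.log_inv] at hn'
  rw [← Real.log_nonneg_iff (by positivity), Real.log_mul (by positivity) hu.ne', Real.log_pow]
  linarith

section Bag

variable {α γ : ℝ} {z : ℂ}

theorem Bag_eq_add_div_one_add_mul (α γ : ℝ) (z : ℂ) :
    Bag α γ z = (exp (I * π * γ * z) + (Real.exp (-(π * α)) : ℝ)) /
      (1 + (Real.exp (-(π * α)) : ℝ) * exp (I * π * γ * z)) := by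
  rw [Bag, sub_eq_add_neg, Complex.exp_add]
  push_cast [Complex.ofReal_exp]
  ring_nf

theorem norm_exp_I_mul_pi_mul (γ : ℝ) (z : ℂ) :
    ‖exp (I * π * γ * z)‖ = Real.exp (-(π * γ * z.im)) := by
  rw [Complex.norm_exp]
  simp [mul_re, mul_im]

theorem exp_neg_pi_mul_lt_one (hα : 0 < α) : Real.exp (-(π * α)) < 1 :=
  Real.exp_lt_one_iff.mpr (neg_neg_of_pos (by positivity))

theorem norm_exp_I_mul_pi_mul_le_one (hγz : 0 ≤ γ * z.im) : ‖exp (I * π * γ * z)‖ ≤ 1 := by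
  rw [norm_exp_I_mul_pi_mul, Real.exp_le_one_iff, mul_assoc]
  exact neg_nonpos.mpr (mul_nonneg Real.pi_pos.le hγz)

theorem norm_Bag_le_of_le (hα : 0 < α) (hγz : 0 ≤ γ * z.im) {s : ℝ}
    (hs : Real.exp (-(π * γ * z.im)) ≤ s) :
    ‖Bag α γ z‖ ≤ (s + Real.exp (-(π * α))) / (1 + Real.exp (-(π * α)) * s) := by
  have ha := exp_neg_pi_mul_lt_one hα
  rw [Bag_eq_add_div_one_add_mul]
  refine (norm_add_div_one_add_mul_le (Real.exp_pos _).le ha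
    (norm_exp_I_mul_pi_mul_le_one hγz)).trans ?_
  rw [norm_exp_I_mul_pi_mul]
  exact add_div_one_add_mul_le_of_le (Real.exp_pos _).le ha.le (Real.exp_pos _).le hs

theorem norm_Bag_le_one (hα : 0 < α) (hγz : 0 ≤ γ * z.im) : ‖Bag α γ z‖ ≤ 1 := by
  refine (norm_Bag_le_of_le hα hγz
    (norm_exp_I_mul_pi_mul γ z ▸ norm_exp_I_mul_pi_mul_le_one hγz)).trans_eq ?_
  rw [mul_one, add_comm, div_self (by positivity)]

theorem norm_Bag_le_inv_cosh (hα : 0 < α) (hαγz : α ≤ γ * z.im) :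
    ‖Bag α γ z‖ ≤ (Real.cosh (π * α))⁻¹ := by
  refine (norm_Bag_le_of_le hα (hα.le.trans hαγz) ?_).trans_eq (inv_cosh_eq _).symm
  rw [Real.exp_le_exp, mul_assoc]
  exact neg_le_neg (mul_le_mul_of_nonneg_left hαγz Real.pi_pos.le)

theorem norm_Bag_sub_one_le (hα : 0 < α) (hγz : 0 ≤ γ * z.im) :
    ‖Bag α γ z - 1‖ ≤ ‖exp (I * π * γ * z) - 1‖ := by
  rw [Bag_eq_add_div_one_add_mul]
  exact norm_add_div_one_add_mul_sub_one_le (Real.exp_pos _).le (exp_neg_pi_mul_lt_one hα)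
    (norm_exp_I_mul_pi_mul_le_one hγz)

theorem multipliable_Bag {β ρ : ℝ} (hα : 0 < α) (hβ0 : 0 ≤ β) (hβ1 : β < 1) (hρ : 0 ≤ ρ)
    (hz : 0 ≤ z.im) : Multipliable fun n : ℕ ↦ Bag α (β ^ n * ρ) z := by
  have hγz (n : ℕ) : 0 ≤ β ^ n * ρ * z.im := by positivity
  have hnorm : (fun n : ℕ ↦ ‖I * π * ((β ^ n * ρ : ℝ) : ℂ) * z‖) =
      fun n ↦ π * ρ * ‖z‖ * β ^ n := by
    ext n
    rw [norm_mul, norm_mul, norm_mul, norm_I, norm_real, norm_real, Real.norm_of_nonneg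
      Real.pi_pos.le, Real.norm_of_nonneg (by positivity)]
    ring
  have hexp := summable_norm_exp_sub_one (hnorm ▸ (summable_geometric_of_lt_one hβ0 hβ1).mul_left _)
  have hsum : Summable fun n : ℕ ↦ ‖Bag α (β ^ n * ρ) z - 1‖ :=
    hexp.of_nonneg_of_le (fun _ ↦ norm_nonneg _) fun n ↦ norm_Bag_sub_one_le hα (hγz n)
  simpa using multipliable_one_add_of_summable hsum

end Bag

/-- upper estimate for `|B(x+iy)|` in the half-plane `y > α/ρ`. -/
theorem Bprod_upper_estimate (α β ρ : ℝ) (hα : 0 < α) (hβ0 : 0 < β) (hβ1 : β < 1)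
    (hρ : 0 < ρ) (x y : ℝ) (hy : α / ρ < y) :
    ‖Bprod α β ρ ((x : ℂ) + (y : ℂ) * Complex.I)‖ ≤
      Real.exp (-(Real.log (Real.cosh (Real.pi * α)) * Real.log (ρ * y / α) /
        Real.log (1 / β))) := by
  set z : ℂ := (x : ℂ) + (y : ℂ) * I
  have hzim : z.im = y := by simp [z]
  have hy0 : 0 < y := (div_pos hα hρ).trans hy
  set N := Real.log (ρ * y / α) / Real.log (1 / β)
  set L := Real.log (Real.cosh (π * α))
  have hmult := multipliable_Bag hα hβ0.le hβ1 hρ.le (hzim ▸ hy0.le)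
  have hfactor : ∀ i < ⌈N⌉₊, ‖Bag α (β ^ i * ρ) z‖ ≤ Real.exp (-L) := by
    intro i hi
    have h := one_le_pow_mul_of_le_log_div hβ0 hβ1 (by positivity) (Nat.lt_ceil.mp hi).le
    rw [← mul_div_assoc, one_le_div hα] at h
    rw [Real.exp_neg, Real.exp_log (Real.cosh_pos _)]
    exact norm_Bag_le_inv_cosh hα (by rw [hzim]; linarith)
  calc ‖Bprod α β ρ z‖ = ∏' n, ‖Bag α (β ^ n * ρ) z‖ := hmult.norm_tprod
    _ ≤ Real.exp (-L) ^ ⌈N⌉₊ :=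
        tprod_le_pow_of_le hmult.norm (fun _ ↦ norm_nonneg _)
          (fun _ ↦ norm_Bag_le_one hα (by rw [hzim]; positivity)) hfactor
    _ = Real.exp (-(L * ⌈N⌉₊)) := by rw [← Real.exp_nat_mul]; ring_nf
    _ ≤ Real.exp (-(L * N)) :=
        Real.exp_le_exp.mpr <| neg_le_neg <|
          mul_le_mul_of_nonneg_left (Nat.le_ceil N) (Real.log_nonneg (Real.one_le_cosh _))
    _ = _ := by rw [mul_div_assoc]
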